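/- Let ι be a nonempty finite type, let ρ1 and ρ2 be positive semidefinite complex matrices indexed by ι with trace 1, and let 0 ≤ p ≤ 1/2. Set Δ = (1−p) • ρ2 − p • ρ1 and let M be the orthogonal projection onto the span of the eigenvectors of the Hermitian matrix Δ with positive eigenvalues; assume M ≠ 0. Then the two-outcome POVM {(1/2) • (1 + (1/‖M‖₂) • M), (1/2) • (1 − (1/‖M‖₂) • M)} has discrimination error Re(p · Tr((1/2) • (1 + (1/‖M‖₂) • M) · ρ1) + (1−p) · Tr((1/2) • (1 − (1/‖M‖₂) • M) · ρ2)) = (1/2) · (1 − ((1−2p) + ‖(1−p) • ρ2 − p • ρ1‖₁)/(2‖M‖₂)). -/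

import Mathlib

open Matrix Finset
open scoped BigOperators Kronecker ComplexOrder

noncomputable section

/-- The flip (swap) operator on `ℂ^d ⊗ ℂ^d`. -/
def Flip (d : ℕ) : Matrix (Fin d × Fin d) (Fin d × Fin d) ℂ :=
  Matrix.of fun p q => if p.1 = q.2 ∧ p.2 = q.1 then 1 else 0

/-- Projection onto the symmetric subspace, `Π_s = (1 + F)/2`. -/
def projSym (d : ℕ) : Matrix (Fin d × Fin d) (Fin d × Fin d) ℂ :=
  (2 : ℂ)⁻¹ • (1 + Flip d)

/-- Projection onto the antisymmetric subspace, `Π_a = (1 - F)/2`. -/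
def projAsym (d : ℕ) : Matrix (Fin d × Fin d) (Fin d × Fin d) ℂ :=
  (2 : ℂ)⁻¹ • (1 - Flip d)

/-- The symmetric Werner state `σ_d = (2/(d(d+1))) • Π_s`. -/
def wernerSym (d : ℕ) : Matrix (Fin d × Fin d) (Fin d × Fin d) ℂ :=
  (2 / ((d : ℂ) * ((d : ℂ) + 1))) • projSym d

/-- The antisymmetric Werner state `α_d = (2/(d(d-1))) • Π_a`. -/
def wernerAsym (d : ℕ) : Matrix (Fin d × Fin d) (Fin d × Fin d) ℂ :=
  (2 / ((d : ℂ) * ((d : ℂ) - 1))) • projAsym d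

/-- The POVM element `G_d`: diagonal, with `(i,j),(i,j)` entry `1` iff `i ≠ j`. -/
def Gmat (d : ℕ) : Matrix (Fin d × Fin d) (Fin d × Fin d) ℂ :=
  Matrix.diagonal fun p => if p.1 ≠ p.2 then 1 else 0

/-- `n`-fold tensor power of a matrix on `ℂ^d ⊗ ℂ^d`. -/
def tpow {d : ℕ} (n : ℕ) (X : Matrix (Fin d × Fin d) (Fin d × Fin d) ℂ) :
    Matrix (Fin n → Fin d × Fin d) (Fin n → Fin d × Fin d) ℂ :=
  Matrix.of fun f g => ∏ m, X (f m) (g m)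

/-- The twirled single-copy POVM element `M_d = ((d-1)/(d+1)) • Π_s + Π_a`. -/
def MdMat (d : ℕ) : Matrix (Fin d × Fin d) (Fin d × Fin d) ℂ :=
  (((d : ℂ) - 1) / ((d : ℂ) + 1)) • projSym d + projAsym d

/-- `A_k`: sum over all `k`-element subsets `S` of the copies of the tensor product with
`Π_a` on copies in `S` and `Π_s` elsewhere. -/
def Amat (d n k : ℕ) : Matrix (Fin n → Fin d × Fin d) (Fin n → Fin d × Fin d) ℂ :=
  ∑ S ∈ Finset.powersetCard k (Finset.univ : Finset (Fin n)),
    Matrix.of fun f g => ∏ m, (if m ∈ S then projAsym d else projSym d) (f m) (g m)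

/-- Partial transpose on `ℂ^d ⊗ ℂ^d`. -/
def pt {d : ℕ} (X : Matrix (Fin d × Fin d) (Fin d × Fin d) ℂ) :
    Matrix (Fin d × Fin d) (Fin d × Fin d) ℂ :=
  Matrix.of fun p q => X (p.1, q.2) (q.1, p.2)

/-- The maximally entangled state `Φ_d`. -/
def Phi (d : ℕ) : Matrix (Fin d × Fin d) (Fin d × Fin d) ℂ :=
  Matrix.of fun p q => if p.1 = p.2 ∧ q.1 = q.2 then ((d : ℂ))⁻¹ else 0

/-- `n`-copy partial transpose. -/
def ptN {d n : ℕ} (Y : Matrix (Fin n → Fin d × Fin d) (Fin n → Fin d × Fin d) ℂ) :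
    Matrix (Fin n → Fin d × Fin d) (Fin n → Fin d × Fin d) ℂ :=
  Matrix.of fun f g => Y (fun m => ((f m).1, (g m).2)) (fun m => ((g m).1, (f m).2))

/-- `T_l`: sum over all `l`-element subsets `S` of the copies of the tensor product with
`Φ_d` on copies in `S` and `1 - Φ_d` elsewhere. -/
def Tmat (d n l : ℕ) : Matrix (Fin n → Fin d × Fin d) (Fin n → Fin d × Fin d) ℂ :=
  ∑ S ∈ Finset.powersetCard l (Finset.univ : Finset (Fin n)),
    Matrix.of fun f g => ∏ m, (if m ∈ S then Phi d else (1 - Phi d)) (f m) (g m)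

/-- The matrix `Q` of the linear program: `Q l k = Σ_{j=0}^{min(l,k)}
(n−l choose k−j)(l choose j)(1−d)^j (1+d)^{l−j}`. -/
def Qmat (n : ℕ) (d : ℝ) (l k : ℕ) : ℝ :=
  ∑ j ∈ Finset.range (min l k + 1),
    ((n - l).choose (k - j) : ℝ) * (l.choose j : ℝ) * (1 - d) ^ j * (1 + d) ^ (l - j)

/-- A PPT POVM element on the `n`-copy space: `E`, `1 - E`, `E^Γ`, `(1-E)^Γ` all PSD. -/
def IsPPTPovmElem {d n : ℕ}
    (E : Matrix (Fin n → Fin d × Fin d) (Fin n → Fin d × Fin d) ℂ) : Prop :=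
  E.PosSemidef ∧ (1 - E).PosSemidef ∧ (ptN E).PosSemidef ∧ (ptN (1 - E)).PosSemidef

/-- Error probability for discriminating `σ_d^{⊗n}` (prior `p`) from `α_d^{⊗n}`
(prior `1-p`) with the two-outcome POVM `{E, 1 - E}`. -/
def errProb (d n : ℕ) (p : ℝ)
    (E : Matrix (Fin n → Fin d × Fin d) (Fin n → Fin d × Fin d) ℂ) : ℝ :=
  ((p : ℂ) * (E * tpow n (wernerSym d)).trace
    + (1 - (p : ℂ)) * ((1 - E) * tpow n (wernerAsym d)).trace).re

/-- Separability of a bipartite matrix. -/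
def IsSep {I J : Type*} [Fintype I] [Fintype J]
    (W : Matrix (I × J) (I × J) ℂ) : Prop :=
  ∃ (m : ℕ) (A : Fin m → Matrix I I ℂ) (B : Fin m → Matrix J J ℂ),
    (∀ i, (A i).PosSemidef) ∧ (∀ i, (B i).PosSemidef) ∧ W = ∑ i, A i ⊗ₖ B i

/-- Square root of a positive semidefinite matrix (the definition `Matrix.PosSemidef.sqrt`
of the older Mathlib, removed since). -/
def Matrix.PosSemidef.sqrt {n : Type*} [Fintype n] [DecidableEq n] {A : Matrix n n ℂ}
    (hA : A.PosSemidef) : Matrix n n ℂ :=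
  hA.1.eigenvectorUnitary.1 * diagonal ((↑) ∘ (√·) ∘ hA.1.eigenvalues) *
    (star hA.1.eigenvectorUnitary : Matrix n n ℂ)

/-- Trace norm `‖X‖₁ = Tr √(Xᴴ X)`. -/
def traceNorm {ι : Type*} [Fintype ι] [DecidableEq ι] (X : Matrix ι ι ℂ) : ℝ :=
  ((Matrix.posSemidef_conjTranspose_mul_self X).sqrt).trace.re

/-- Frobenius (Hilbert–Schmidt) norm `‖X‖₂ = √(Tr (Xᴴ X))`. -/
def frobNorm {ι : Type*} [Fintype ι] (X : Matrix ι ι ℂ) : ℝ :=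
  Real.sqrt ((Xᴴ * X).trace.re)

/-! Let `P₊` be the projection onto the positive eigenspace of the Hermitian matrix `Δ`. Functional
calculus gives `P₊ Δ = Δ⁺` and `2 Δ⁺ = Δ + |Δ|`, so `Re Tr (P₊ Δ) = (Tr Δ + ‖Δ‖₁) / 2` with
`Tr Δ = 1 - 2p`. The error of the POVM `{(1 ± c M) / 2}` is affine in `c` with slope
`-Re Tr (M Δ) / 2`; taking `M = P₊` and `c = 1 / ‖M‖₂` gives the formula. -/

section

open scoped MatrixOrder

variable {ι : Type*} [Fintype ι] [DecidableEq ι]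

theorem Matrix.PosSemidef.sqrt_eq_cfcSqrt {A : Matrix ι ι ℂ} (hA : A.PosSemidef) :
    hA.sqrt = CFC.sqrt A := by
  rw [CFC.sqrt_eq_cfc, cfc_nnreal_eq_real _ A, hA.1.cfc_eq, IsHermitian.cfc,
    Matrix.PosSemidef.sqrt, Unitary.conjStarAlgAut_apply]
  congr 3
  funext i
  simp [max_eq_left (hA.eigenvalues_nonneg i)]

theorem traceNorm_eq_re_trace_abs (X : Matrix ι ι ℂ) : traceNorm X = (CFC.abs X).trace.re := by
  rw [traceNorm, Matrix.PosSemidef.sqrt_eq_cfcSqrt, CFC.abs, star_eq_conjTranspose]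

theorem Matrix.IsHermitian.conj_diagonal_eigenvalues_eq_cfc {𝕜 : Type*} [RCLike 𝕜]
    {A : Matrix ι ι 𝕜} (hA : A.IsHermitian) (f : ℝ → ℝ) :
    (hA.eigenvectorUnitary : Matrix ι ι 𝕜) * diagonal (fun i => (f (hA.eigenvalues i) : 𝕜))
      * (hA.eigenvectorUnitary : Matrix ι ι 𝕜)ᴴ = cfc f A := by
  rw [hA.cfc_eq, IsHermitian.cfc, Unitary.conjStarAlgAut_apply]
  rfl

theorem Matrix.IsHermitian.cfc_pos_mul_self {𝕜 : Type*} [RCLike 𝕜]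
    {A : Matrix ι ι 𝕜} (hA : A.IsHermitian) :
    cfc (fun x : ℝ => if 0 < x then 1 else 0) A * A = A⁺ := by
  have hA' : IsSelfAdjoint A := hA
  nth_rw 2 [← cfc_id' ℝ A]
  -- every function is continuous on the finite spectrum of a matrix
  rw [← cfc_mul _ _ A (A.finite_real_spectrum.continuousOn _), CFC.posPart_def, cfcₙ_eq_cfc]
  refine cfc_congr fun x _ => ?_
  split_ifs with h
  · simp [h.le]
  · simp [posPart_eq_zero.mpr (not_lt.mp h)]

theorem Matrix.IsHermitian.two_mul_re_trace_cfc_pos_mul_self {A : Matrix ι ι ℂ}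
    (hA : A.IsHermitian) :
    2 * (cfc (fun x : ℝ => if 0 < x then 1 else 0) A * A).trace.re
      = A.trace.re + traceNorm A := by
  have hA' : IsSelfAdjoint A := hA
  have h2 : (2 : ℂ) • A⁺ = A + CFC.abs A :=
    calc (2 : ℂ) • A⁺ = (A⁺ - A⁻) + (A⁺ + A⁻) := by module
      _ = A + CFC.abs A := by rw [CFC.posPart_sub_negPart A, CFC.posPart_add_negPart A]
  have h2re := congrArg (fun X => X.trace.re) h2
  simp only [trace_smul, trace_add, smul_eq_mul] at h2re
  rw [hA.cfc_pos_mul_self, traceNorm_eq_re_trace_abs, ← Complex.add_re, ← h2re]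
  simp

theorem re_error_of_povm_half_one_add_smul {ρ1 ρ2 : Matrix ι ι ℂ} (t1 : ρ1.trace = 1)
    (t2 : ρ2.trace = 1) (M : Matrix ι ι ℂ) (p c : ℝ) :
    ((p : ℂ) * (((2 : ℂ)⁻¹ • (1 + (c : ℂ) • M)) * ρ1).trace
        + ((1 - p : ℝ) : ℂ) * (((2 : ℂ)⁻¹ • (1 - (c : ℂ) • M)) * ρ2).trace).re
      = 1 / 2 - c / 2 * (M * (((1 - p : ℝ) : ℂ) • ρ2 - ((p : ℝ) : ℂ) • ρ1)).trace.re := by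
  have hlin : (p : ℂ) * (((2 : ℂ)⁻¹ • (1 + (c : ℂ) • M)) * ρ1).trace
        + ((1 - p : ℝ) : ℂ) * (((2 : ℂ)⁻¹ • (1 - (c : ℂ) • M)) * ρ2).trace
      = 2⁻¹ - ((c / 2 : ℝ) : ℂ) * (M * (((1 - p : ℝ) : ℂ) • ρ2 - ((p : ℝ) : ℂ) • ρ1)).trace := by
    simp only [smul_mul, add_mul, sub_mul, one_mul, mul_sub, Matrix.mul_smul, trace_add, trace_sub,
      trace_smul, t1, t2, smul_eq_mul]
    push_cast
    ring
  rw [hlin, Complex.sub_re, Complex.re_ofReal_mul]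
  norm_num

end

theorem normalized_helstrom_error_general {ι : Type} [Fintype ι] [DecidableEq ι]
    (ρ1 ρ2 : Matrix ι ι ℂ)
    (t1 : ρ1.trace = 1) (t2 : ρ2.trace = 1)
    (p : ℝ)
    (Δ : Matrix ι ι ℂ) (hΔdef : Δ = ((1 - p : ℝ) : ℂ) • ρ2 - ((p : ℝ) : ℂ) • ρ1)
    (hΔ : Δ.IsHermitian)
    (M : Matrix ι ι ℂ)
    (hM : M = (hΔ.eigenvectorUnitary : Matrix ι ι ℂ)
        * Matrix.diagonal (fun i => if 0 < hΔ.eigenvalues i then (1 : ℂ) else 0)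
        * (hΔ.eigenvectorUnitary : Matrix ι ι ℂ)ᴴ) :
    ((p : ℂ) * (((2 : ℂ)⁻¹ • (1 + ((frobNorm M : ℝ) : ℂ)⁻¹ • M)) * ρ1).trace
        + ((1 - p : ℝ) : ℂ)
          * (((2 : ℂ)⁻¹ • (1 - ((frobNorm M : ℝ) : ℂ)⁻¹ • M)) * ρ2).trace).re
      = (1 / 2) * (1 - ((1 - 2 * p)
          + traceNorm (((1 - p : ℝ) : ℂ) • ρ2 - ((p : ℝ) : ℂ) • ρ1))
          / (2 * frobNorm M)) := by
  have hM_eq_cfc : M = cfc (fun x : ℝ => if 0 < x then 1 else 0) Δ := by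
    rw [hM, ← hΔ.conj_diagonal_eigenvalues_eq_cfc]
    simp only [apply_ite, RCLike.ofReal_one, RCLike.ofReal_zero]
  have htrace : Δ.trace.re = 1 - 2 * p := by
    simp only [hΔdef, trace_sub, trace_smul, t1, t2, smul_eq_mul, mul_one, Complex.sub_re,
      Complex.ofReal_re]
    ring
  have hpos := hΔ.two_mul_re_trace_cfc_pos_mul_self
  rw [htrace, ← hM_eq_cfc] at hpos
  rw [← Complex.ofReal_inv, re_error_of_povm_half_one_add_smul t1 t2, ← hΔdef]
  linear_combination (-(frobNorm M)⁻¹ / 4) * hpos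

/-- error probability of the normalized Holevo–Helstrom POVM. -/
theorem normalized_helstrom_error {ι : Type} [Fintype ι] [DecidableEq ι] [Nonempty ι]
    (ρ1 ρ2 : Matrix ι ι ℂ) (h1 : ρ1.PosSemidef) (h2 : ρ2.PosSemidef)
    (t1 : ρ1.trace = 1) (t2 : ρ2.trace = 1)
    (p : ℝ) (hp0 : 0 ≤ p) (hp : p ≤ 1 / 2)
    (Δ : Matrix ι ι ℂ) (hΔdef : Δ = ((1 - p : ℝ) : ℂ) • ρ2 - ((p : ℝ) : ℂ) • ρ1)
    (hΔ : Δ.IsHermitian)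
    (M : Matrix ι ι ℂ)
    (hM : M = (hΔ.eigenvectorUnitary : Matrix ι ι ℂ)
        * Matrix.diagonal (fun i => if 0 < hΔ.eigenvalues i then (1 : ℂ) else 0)
        * (hΔ.eigenvectorUnitary : Matrix ι ι ℂ)ᴴ)
    (hM0 : M ≠ 0) :
    ((p : ℂ) * (((2 : ℂ)⁻¹ • (1 + ((frobNorm M : ℝ) : ℂ)⁻¹ • M)) * ρ1).trace
        + ((1 - p : ℝ) : ℂ)
          * (((2 : ℂ)⁻¹ • (1 - ((frobNorm M : ℝ) : ℂ)⁻¹ • M)) * ρ2).trace).re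
      = (1 / 2) * (1 - ((1 - 2 * p)
          + traceNorm (((1 - p : ℝ) : ℂ) • ρ2 - ((p : ℝ) : ℂ) • ρ1))
          / (2 * frobNorm M)) :=
  normalized_helstrom_error_general ρ1 ρ2 t1 t2 p Δ hΔdef hΔ M hM

end
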